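/- Let n ≥ 2 and let A be a symmetric n×n real matrix, and let v be a nonzero vector in ℝⁿ. Then the squared Frobenius norm of A satisfies ∑_{i,j} A_{ij}² ≥ (trace A)²/n + (n/(n−1))·(⟨v, Av⟩/|v|² − (trace A)/n)². -/
import Mathlib


theorem stmt_7 (n : ℕ) (hn : 2 ≤ n) (A : Matrix (Fin n) (Fin n) ℝ)
    (hA : A.IsSymm) (v : Fin n → ℝ) (hv : v ≠ 0) :
    A.trace ^ 2 / (n : ℝ) +
      ((n : ℝ) / ((n : ℝ) - 1)) *
        ((∑ i, v i * A.mulVec v i) / (∑ i, (v i) ^ 2) - A.trace / (n : ℝ)) ^ 2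
      ≤ ∑ i, ∑ j, (A i j) ^ 2 := by
  have hn0 : (0:ℝ) < (n:ℝ) := by positivity
  have hn1 : (1:ℝ) ≤ (n:ℝ) - 1 := by
    have : (2:ℝ) ≤ (n:ℝ) := by exact_mod_cast hn
    linarith
  have hn1' : (n:ℝ) - 1 ≠ 0 := by linarith
  have hnne : (n:ℝ) ≠ 0 := ne_of_gt hn0
  set s : ℝ := ∑ i, (v i)^2 with hs_def
  have hs : 0 < s := by
    obtain ⟨i, hi⟩ := Function.ne_iff.mp hv
    have h1 : (v i)^2 ≤ s := by
      apply Finset.single_le_sum (f := fun j => (v j)^2)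
      · intro j _; positivity
      · exact Finset.mem_univ i
    have hi' : v i ≠ 0 := hi
    have h2 : 0 < (v i)^2 := by
      rcases hi'.lt_or_gt with h | h <;> nlinarith
    linarith
  have hsne : s ≠ 0 := ne_of_gt hs
  set t : ℝ := A.trace with ht_def
  set q : ℝ := ∑ i, v i * A.mulVec v i with hq_def
  set w : ℝ := q / s - t / n with hw_def
  set α : ℝ := t / n - w / ((n:ℝ) - 1) with hα_def
  set β : ℝ := (n:ℝ) * w / (((n:ℝ) - 1) * s) with hβ_def
  have ht : t = ∑ i, A i i := by
    rw [ht_def, Matrix.trace]; rfl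
  have hq : q = ∑ i, ∑ j, v i * A i j * v j := by
    rw [hq_def]
    apply Finset.sum_congr rfl
    intro i _
    rw [Matrix.mulVec, dotProduct, Finset.mul_sum]
    apply Finset.sum_congr rfl
    intro j _
    ring
  have h0 : (0:ℝ) ≤ ∑ i, ∑ j,
      (A i j - α * (if i = j then (1:ℝ) else 0) - β * (v i * v j))^2 := by
    apply Finset.sum_nonneg; intro i _
    apply Finset.sum_nonneg; intro j _
    positivity
  have e1 : ∑ i, ∑ j, A i j * (if i = j then (1:ℝ) else 0) = t := by
    rw [ht]
    apply Finset.sum_congr rfl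
    intro i _
    simp
  have e2 : ∑ _i : Fin n, ∑ j : Fin n, (if _i = j then (1:ℝ) else 0) = n := by
    simp
  have e3 : ∑ i, ∑ j, (v i)^2 * (v j)^2 = s^2 := by
    rw [hs_def, ← Finset.sum_mul_sum]
    exact (sq _).symm
  have e4 : ∑ i : Fin n, ∑ j : Fin n,
      (if i = j then (1:ℝ) else 0) * (v i * v j) = s := by
    rw [hs_def]
    apply Finset.sum_congr rfl
    intro i _
    simp [pow_two]
  have hexp : ∑ i, ∑ j,
      (A i j - α * (if i = j then (1:ℝ) else 0) - β * (v i * v j))^2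
      = (∑ i, ∑ j, (A i j)^2) - 2*α*t - 2*β*q + α^2*n + β^2*s^2 + 2*α*β*s := by
    have key : ∀ i j : Fin n,
        (A i j - α * (if i = j then (1:ℝ) else 0) - β * (v i * v j))^2
        = (A i j)^2 - 2*α*(A i j * (if i = j then (1:ℝ) else 0))
          - 2*β*(v i * A i j * v j)
          + α^2*((if i = j then (1:ℝ) else 0))
          + β^2*((v i)^2 * (v j)^2)
          + 2*α*β*((if i = j then (1:ℝ) else 0) * (v i * v j)) := by
      intro i j
      by_cases h : i = j <;> simp [h] <;> ring
    calc ∑ i, ∑ j, (A i j - α * (if i = j then (1:ℝ) else 0) - β * (v i * v j))^2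
        = ∑ i, ∑ j, ((A i j)^2 - 2*α*(A i j * (if i = j then (1:ℝ) else 0))
          - 2*β*(v i * A i j * v j)
          + α^2*((if i = j then (1:ℝ) else 0))
          + β^2*((v i)^2 * (v j)^2)
          + 2*α*β*((if i = j then (1:ℝ) else 0) * (v i * v j))) :=
          Finset.sum_congr rfl fun i _ => Finset.sum_congr rfl fun j _ => key i j
      _ = (∑ i, ∑ j, (A i j)^2)
          - 2*α*(∑ i, ∑ j, A i j * (if i = j then (1:ℝ) else 0))
          - 2*β*(∑ i, ∑ j, v i * A i j * v j)
          + α^2*(∑ i : Fin n, ∑ j : Fin n, (if i = j then (1:ℝ) else 0))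
          + β^2*(∑ i, ∑ j, (v i)^2 * (v j)^2)
          + 2*α*β*(∑ i : Fin n, ∑ j : Fin n,
              (if i = j then (1:ℝ) else 0) * (v i * v j)) := by
          simp only [Finset.sum_add_distrib, Finset.sum_sub_distrib, ← Finset.mul_sum]
      _ = (∑ i, ∑ j, (A i j)^2) - 2*α*t - 2*β*q + α^2*n + β^2*s^2 + 2*α*β*s := by
          rw [e1, ← hq, e2, e3, e4]
  rw [hexp] at h0
  have hqw : q = s * w + s * t / n := by
    rw [hw_def]; field_simp; ring
  have key2 : t ^ 2 / n + ((n:ℝ) / ((n:ℝ) - 1)) * w ^ 2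
      = 2*α*t + 2*β*q - α^2*n - β^2*s^2 - 2*α*β*s := by
    rw [hα_def, hβ_def, hqw]
    field_simp
    ring
  calc t ^ 2 / n + ((n:ℝ) / ((n:ℝ) - 1)) * w ^ 2
      = 2*α*t + 2*β*q - α^2*n - β^2*s^2 - 2*α*β*s := key2
    _ ≤ ∑ i, ∑ j, (A i j)^2 := by linarith
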